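/- Let d ≥ 2 and let B = (b_{ij}) ∈ ℝ^{d×d} be a min-standard matrix whose coefficients satisfy: (i) 0 ≤ b_{ij} ≤ 2 for all i,j; (ii) b_{ii} = 0 for all i; (iii) b_{ij} + b_{ji} = 2 for all i ≠ j; and (iv) 2 ≤ b_{ij} + b_{jk} + b_{ki} ≤ 4 for all pairwise distinct i,j,k. Then both the tropical diameter and the min-tropical volume of B equal 2, i.e., tdiam(B) = 2 and tvol_min(B) = 2. -/
import Mathlib


open scoped BigOperators

/-- Tropical distance between two points of `ℝ^d`. -/
noncomputable def tdist {d : ℕ} (v w : Fin d → ℝ) : ℝ :=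
  (⨆ i, (v i - w i)) - ⨅ i, (v i - w i)

/-- Tropical diameter of a square matrix: maximal tropical distance between rows. -/
noncomputable def tdiam {d : ℕ} (B : Matrix (Fin d) (Fin d) ℝ) : ℝ :=
  ⨆ i, ⨆ j, tdist (B i) (B j)

/-- `B|σ = Σ_i b_{i,σ(i)}`. -/
noncomputable def permSum {d : ℕ} (B : Matrix (Fin d) (Fin d) ℝ) (σ : Equiv.Perm (Fin d)) : ℝ :=
  ∑ i, B i (σ i)

/-- Min-tropical determinant. -/
noncomputable def tdetMin {d : ℕ} (B : Matrix (Fin d) (Fin d) ℝ) : ℝ :=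
  ⨅ σ : Equiv.Perm (Fin d), permSum B σ

/-- Min-tropical volume computed with respect to a permutation `σ₀` attaining the
min-tropical determinant (the value does not depend on this choice). -/
noncomputable def tvolMinWith {d : ℕ} (B : Matrix (Fin d) (Fin d) ℝ)
    (σ₀ : Equiv.Perm (Fin d)) : ℝ :=
  (⨅ τ : {τ : Equiv.Perm (Fin d) // τ ≠ σ₀}, permSum B (τ : Equiv.Perm (Fin d))) - tdetMin B

/-- A matrix is min-standard if the identity permutation attains the min-tropical
determinant and the first row and column read `(0,1,1,…,1)`. -/
def IsMinStandard {d : ℕ} [NeZero d] (B : Matrix (Fin d) (Fin d) ℝ) : Prop :=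
  permSum B 1 = tdetMin B ∧
    (∀ j, B 0 j = if j = 0 then 0 else 1) ∧
    (∀ i, B i 0 = if i = 0 then 0 else 1)

/-- conversely, any min-standard matrix satisfying conditions
(i)–(iv) has tropical diameter `2` and min-tropical volume `2`.  (Since `B` is
min-standard, the identity permutation attains the min-tropical determinant, so
the min-tropical volume is `tvolMinWith B 1`.) -/
theorem minStandard_conditions_imply_isodiametric (d : ℕ) [NeZero d] (hd : 2 ≤ d)
    (B : Matrix (Fin d) (Fin d) ℝ)
    (hstd : IsMinStandard B)
    (h1 : ∀ i j, 0 ≤ B i j ∧ B i j ≤ 2)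
    (h2 : ∀ i, B i i = 0)
    (h3 : ∀ i j, i ≠ j → B i j + B j i = 2)
    (h4 : ∀ i j k, i ≠ j → j ≠ k → i ≠ k →
      2 ≤ B i j + B j k + B k i ∧ B i j + B j k + B k i ≤ 4) :
    tdiam B = 2 ∧ tvolMinWith B 1 = 2 := by
  have h01 : (0 : Fin d) ≠ 1 := by
    have h1v : ((1 : Fin d) : ℕ) = 1 := by
      simp [Fin.val_one', Nat.mod_eq_of_lt hd]
    intro h
    have := congrArg (Fin.val) h
    simp [h1v] at this
    omega
  -- directed triangle inequality, valid for all triples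
  have tri : ∀ i j k, B i k ≤ B i j + B j k := by
    intro i j k
    by_cases hij : i = j
    · subst hij; linarith [h2 i, (h1 i k).1]
    by_cases hjk : j = k
    · subst hjk; linarith [h2 j, (h1 i j).1]
    by_cases hik : i = k
    · subst hik; have := h3 i j hij; have := h2 i; linarith
    · have h4' := (h4 i j k hij hjk hik).1
      have h3' := h3 i k hik
      linarith
  -- tdist between distinct rows is 2
  have htdist : ∀ i j, i ≠ j → tdist (B i) (B j) = 2 := by
    intro i j hij
    have hsup : (⨆ k, (B i k - B j k)) = B i j := by
      apply le_antisymm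
      · apply ciSup_le
        intro k
        have := tri i j k
        linarith
      · have := le_ciSup (Finite.bddAbove_range fun k => B i k - B j k) j
        have hjj := h2 j
        simpa [hjj] using this
    have hinf : (⨅ k, (B i k - B j k)) = -(B j i) := by
      apply le_antisymm
      · have := ciInf_le (Finite.bddBelow_range fun k => B i k - B j k) i
        have hii := h2 i
        simpa [hii] using this
      · apply le_ciInf
        intro k
        have := tri j i k
        linarith
    have h3' := h3 i j hij
    rw [tdist, hsup, hinf]
    linarith
  have htself : ∀ i, tdist (B i) (B i) = 0 := by
    intro i
    simp [tdist]
  -- tdiam = 2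
  have hdiam : tdiam B = 2 := by
    apply le_antisymm
    · apply ciSup_le
      intro i
      apply ciSup_le
      intro j
      by_cases hij : i = j
      · subst hij; rw [htself]; norm_num
      · rw [htdist i j hij]
    · calc (2 : ℝ) = tdist (B 0) (B 1) := (htdist 0 1 h01).symm
        _ ≤ ⨆ j, tdist (B 0) (B j) :=
            le_ciSup (f := fun j => tdist (B 0) (B j)) (Finite.bddAbove_range _) 1
        _ ≤ tdiam B := le_ciSup (Finite.bddAbove_range fun i => ⨆ j, tdist (B i) (B j)) 0
  refine ⟨hdiam, ?_⟩
  -- tdetMin B = 0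
  have hdet : tdetMin B = 0 := by
    rw [← hstd.1]
    simp [permSum, h2]
  -- lower bound for permSum over non-identity permutations
  have hperm : ∀ τ : Equiv.Perm (Fin d), τ ≠ 1 → 2 ≤ permSum B τ := by
    intro τ hτ
    obtain ⟨i₀, hi₀⟩ : ∃ i, τ i ≠ i := by
      by_contra h
      push_neg at h
      exact hτ (Equiv.ext h)
    set g : Fin d → ℝ := fun j => B i₀ j with hg
    set j₀ := τ.symm i₀ with hj₀def
    have hj₀ : τ j₀ = i₀ := Equiv.apply_symm_apply τ i₀
    have hj₀ne : j₀ ≠ i₀ := by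
      intro h
      apply hi₀
      rw [← h, hj₀, h]
    have key : ∀ j, 0 ≤ B j (τ j) - g (τ j) + g j := by
      intro j
      have := tri i₀ j (τ j)
      simp only [hg]
      linarith
    have at0 : B j₀ (τ j₀) - g (τ j₀) + g j₀ = 2 := by
      rw [hj₀]
      have h3' := h3 j₀ i₀ hj₀ne
      have hii := h2 i₀
      simp only [hg]
      linarith
    have hsum : 2 ≤ ∑ j, (B j (τ j) - g (τ j) + g j) := by
      calc (2 : ℝ) = B j₀ (τ j₀) - g (τ j₀) + g j₀ := at0.symm
        _ ≤ ∑ j, (B j (τ j) - g (τ j) + g j) :=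
            Finset.single_le_sum (fun j _ => key j) (Finset.mem_univ j₀)
    have hcomp : ∑ j, g (τ j) = ∑ j, g j := Equiv.sum_comp τ g
    have hsplit : ∑ j, (B j (τ j) - g (τ j) + g j)
        = permSum B τ - (∑ j, g (τ j)) + ∑ j, g j := by
      rw [permSum]
      rw [Finset.sum_add_distrib, Finset.sum_sub_distrib]
    rw [hsplit, hcomp] at hsum
    linarith
  -- the swap (0 1) gives permSum = 2
  have hswapne : Equiv.swap (0 : Fin d) 1 ≠ 1 := by
    intro h
    have := Equiv.ext_iff.mp h 0
    rw [Equiv.swap_apply_left] at this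
    exact h01 this.symm
  have hswapval : permSum B (Equiv.swap (0 : Fin d) 1) = 2 := by
    have hval : ∀ i, B i (Equiv.swap (0 : Fin d) 1 i)
        = (if i = 0 then (1 : ℝ) else 0) + (if i = 1 then 1 else 0) := by
      intro i
      by_cases hi0 : i = 0
      · subst hi0
        rw [Equiv.swap_apply_left, hstd.2.1 1]
        simp only [if_neg h01.symm, if_neg h01, if_pos (rfl : (0 : Fin d) = 0)]
        norm_num
      · by_cases hi1 : i = 1
        · subst hi1
          rw [Equiv.swap_apply_right, hstd.2.2 1]
          simp only [if_neg h01.symm, if_pos (rfl : (1 : Fin d) = 1)]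
          norm_num
        · rw [Equiv.swap_apply_of_ne_of_ne hi0 hi1]
          simp [hi0, hi1, h2 i]
    rw [permSum]
    rw [Finset.sum_congr rfl (fun i _ => hval i)]
    rw [Finset.sum_add_distrib]
    rw [Finset.sum_ite_eq' Finset.univ (0 : Fin d) (fun _ => (1:ℝ))]
    rw [Finset.sum_ite_eq' Finset.univ (1 : Fin d) (fun _ => (1:ℝ))]
    simp
    norm_num
  -- compute the infimum
  have hinf : (⨅ τ : {τ : Equiv.Perm (Fin d) // τ ≠ 1}, permSum B (τ : Equiv.Perm (Fin d)))
      = 2 := by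
    haveI : Nonempty {τ : Equiv.Perm (Fin d) // τ ≠ 1} := ⟨⟨Equiv.swap 0 1, hswapne⟩⟩
    apply le_antisymm
    · have := ciInf_le (Finite.bddBelow_range
        (fun τ : {τ : Equiv.Perm (Fin d) // τ ≠ 1} => permSum B (τ : Equiv.Perm (Fin d))))
        (⟨Equiv.swap (0 : Fin d) 1, hswapne⟩ : {τ : Equiv.Perm (Fin d) // τ ≠ 1})
      simpa [hswapval] using this
    · apply le_ciInf
      rintro ⟨τ, hτ⟩
      exact hperm τ hτ
  rw [tvolMinWith, hinf, hdet]
  norm_num
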